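/- arXiv:1608.05142 — 3 statements merged into one kernel-verified Lean document; each statement's English description precedes it below -/
import Mathlib

section
/- Let T be a finite totally ordered set, define the shaping operator S(f) := M(0 ∨ f ∧ 1), where M is the rearrangement operator and max/min are pointwise. If F : T → [0,1] is nondecreasing and f̂ : T → ℝ is arbitrary, then max_{t∈T} |S(f̂)(t) − F(t)| ≤ max_{t∈T} |f̂(t) − F(t)|; i.e., shaping weakly improves the estimate of a true distribution function. -/
open Set

lemma sort_le_sort' {n : ℕ} {a b : Fin n → ℝ} (hab : ∀ i, a i ≤ b i) (k : Fin n) :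
    (a ∘ Tuple.sort a) k ≤ (b ∘ Tuple.sort b) k := by
  by_contra hlt
  push_neg at hlt
  set σ := Tuple.sort a
  set τ := Tuple.sort b
  set c := a (σ k) with hc
  have h1 : (Finset.univ.filter (fun i : Fin n => a i < c)).card ≤ (k : ℕ) := by
    have himg : (Finset.univ.filter (fun i : Fin n => a i < c)) =
        (Finset.univ.filter (fun j : Fin n => a (σ j) < c)).image σ := by
      ext i
      simp only [Finset.mem_image, Finset.mem_filter, Finset.mem_univ, true_and]
      constructor
      · intro hi; exact ⟨σ.symm i, by simpa using hi, by simp⟩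
      · rintro ⟨j, hj, rfl⟩; exact hj
    rw [himg, Finset.card_image_of_injective _ σ.injective]
    have hsub : (Finset.univ.filter (fun j : Fin n => a (σ j) < c)) ⊆
        Finset.univ.filter (fun j : Fin n => j < k) := by
      intro j hj
      simp only [Finset.mem_filter, Finset.mem_univ, true_and] at hj ⊢
      by_contra hjk
      push_neg at hjk
      exact absurd (Tuple.monotone_sort a hjk) (by simpa using hj.not_ge)
    calc _ ≤ (Finset.univ.filter (fun j : Fin n => j < k)).card := Finset.card_le_card hsub
      _ ≤ (k : ℕ) := by
          classical
          have : (Finset.univ.filter (fun j : Fin n => j < k)) = Finset.Iio k := by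
            ext j; simp
          rw [this]; simp [Fin.card_Iio]
  have h2 : (k : ℕ) + 1 ≤ (Finset.univ.filter (fun i : Fin n => b i ≤ b (τ k))).card := by
    have himg : (Finset.univ.filter (fun j : Fin n => b (τ j) ≤ b (τ k))).image τ =
        Finset.univ.filter (fun i : Fin n => b i ≤ b (τ k)) := by
      ext i
      simp only [Finset.mem_image, Finset.mem_filter, Finset.mem_univ, true_and]
      constructor
      · rintro ⟨j, hj, rfl⟩; exact hj
      · intro hi; exact ⟨τ.symm i, by simpa using hi, by simp⟩
    have hsub : Finset.univ.filter (fun j : Fin n => j ≤ k) ⊆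
        Finset.univ.filter (fun j : Fin n => b (τ j) ≤ b (τ k)) := by
      intro j hj
      simp only [Finset.mem_filter, Finset.mem_univ, true_and] at hj ⊢
      exact Tuple.monotone_sort b hj
    have hcard : (Finset.univ.filter (fun j : Fin n => j ≤ k)).card = (k : ℕ) + 1 := by
      have : (Finset.univ.filter (fun j : Fin n => j ≤ k)) = Finset.Iic k := by
        ext j; simp
      rw [this]; simp [Fin.card_Iic]
    calc (k : ℕ) + 1 = _ := hcard.symm
      _ ≤ (Finset.univ.filter (fun j : Fin n => b (τ j) ≤ b (τ k))).card :=
          Finset.card_le_card hsub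
      _ = _ := by rw [← himg, Finset.card_image_of_injective _ τ.injective]
  have hsub : (Finset.univ.filter (fun i : Fin n => b i ≤ b (τ k))) ⊆
      Finset.univ.filter (fun i : Fin n => a i < c) := by
    intro i hi
    simp only [Finset.mem_filter, Finset.mem_univ, true_and] at hi ⊢
    exact lt_of_le_of_lt (le_trans (hab i) hi) hlt
  have := (h2.trans (Finset.card_le_card hsub)).trans h1
  omega

lemma comp_sort_of_monotone' {n : ℕ} {f : Fin n → ℝ} (hf : Monotone f) :
    f ∘ Tuple.sort f = f := by
  have h := (Tuple.comp_sort_eq_comp_iff_monotone (f := f) (σ := 1)).mpr (by simpa using hf)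
  simpa using h.symm

/-- Rearrangement operator on a finite totally ordered set `T`: it assigns to
the `k`-th smallest element of `T` the `k`-th smallest value of `{f t : t ∈ T}`. -/
noncomputable def rearr {T : Type*} [Fintype T] [LinearOrder T] (f : T → ℝ) : T → ℝ :=
  fun t =>
    ((f ∘ (monoEquivOfFin T rfl)) ∘
      Tuple.sort (f ∘ (monoEquivOfFin T rfl))) ((monoEquivOfFin T rfl).symm t)

/-- The shaping operator `S(f) = M(0 ∨ f ∧ 1)`. -/
noncomputable def shape {T : Type*} [Fintype T] [LinearOrder T] (f : T → ℝ) : T → ℝ :=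
  rearr (fun t => max 0 (min (f t) 1))

/-- Shaping weakly improves the estimate of a true distribution function
in the sup norm. -/
theorem stmt14 {T : Type*} [Fintype T] [Nonempty T] [LinearOrder T]
    (F fhat : T → ℝ) (hF : Monotone F) (hF01 : ∀ t, F t ∈ Icc (0:ℝ) 1) :
    (⨆ t, |shape fhat t - F t|) ≤ ⨆ t, |fhat t - F t| := by
  classical
  set e := monoEquivOfFin T rfl with he
  set ε := ⨆ t, |fhat t - F t| with hε
  have hbdd : BddAbove (Set.range fun t => |fhat t - F t|) :=
    (Set.finite_range _).bddAbove
  have hle : ∀ t, |fhat t - F t| ≤ ε := fun t => le_ciSup hbdd t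
  set g : T → ℝ := fun t => max 0 (min (fhat t) 1) with hg
  have hgF : ∀ t, |g t - F t| ≤ ε := by
    intro t
    refine le_trans ?_ (hle t)
    obtain ⟨h0, h1⟩ := hF01 t
    rcases le_total (fhat t) 0 with hx | hx
    · have hgt : g t = 0 := by
        simp [hg, min_eq_left (hx.trans zero_le_one), max_eq_left hx]
      rw [hgt, abs_of_nonpos (by linarith), abs_of_nonpos (by linarith)]; linarith
    rcases le_total 1 (fhat t) with hx1 | hx1
    · have hgt : g t = 1 := by
        simp [hg, min_eq_right hx1, max_eq_right (zero_le_one)]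
      rw [hgt, abs_of_nonneg (by linarith), abs_of_nonneg (by linarith)]; linarith
    · have hgt : g t = fhat t := by simp [hg, min_eq_left hx1, max_eq_right hx]
      rw [hgt]
  -- upper bound: g ≤ F + ε pointwise
  have hub : ∀ i : Fin (Fintype.card T), (g ∘ e) i ≤ ((fun t => F t + ε) ∘ e) i := by
    intro i
    have := abs_le.mp (hgF (e i))
    simp only [Function.comp]; linarith [this.2]
  have hlb : ∀ i : Fin (Fintype.card T), ((fun t => F t - ε) ∘ e) i ≤ (g ∘ e) i := by
    intro i
    have := abs_le.mp (hgF (e i))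
    simp only [Function.comp]; linarith [this.1]
  have hmono_ub : Monotone ((fun t => F t + ε) ∘ e) :=
    fun i j hij => by simpa using add_le_add_right (hF (e.monotone hij)) ε
  have hmono_lb : Monotone ((fun t => F t - ε) ∘ e) :=
    fun i j hij => by simpa using sub_le_sub_right (hF (e.monotone hij)) ε
  refine ciSup_le fun t => ?_
  rw [abs_le]
  have hub' := sort_le_sort' hub (e.symm t)
  have hlb' := sort_le_sort' hlb (e.symm t)
  rw [comp_sort_of_monotone' hmono_ub] at hub'
  rw [comp_sort_of_monotone' hmono_lb] at hlb'
  simp only [Function.comp, OrderIso.apply_symm_apply] at hub' hlb'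
  have hse : shape fhat t = ((g ∘ e) ∘ Tuple.sort (g ∘ e)) (e.symm t) := rfl
  rw [hse]
  simp only [Function.comp_apply]
  constructor <;> [linarith [hlb']; linarith [hub']]
end

section
/- Let T be a finite totally ordered set and S(f) := M(0 ∨ f ∧ 1) the shaping operator. For any L', U' : T → ℝ, max_{t∈T} |S(U')(t) − S(L')(t)| ≤ max_{t∈T} |U'(t) − L'(t)|; i.e., the reshaped confidence band is weakly shorter than the original band in the sup norm. -/
open Set

lemma key_one {n : ℕ} (f g : Fin n → ℝ) (k : Fin n) :
    (f ∘ Tuple.sort f) k - (g ∘ Tuple.sort g) k ≤ ⨆ i, |f i - g i| := by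
  have : Nonempty (Fin n) := ⟨k⟩
  set B := Finset.image (Tuple.sort g) (Finset.Iic k) with hB
  set C := Finset.image (Tuple.sort f) (Finset.Ici k) with hC
  have hcard : (B ∩ C).Nonempty := by
    rw [← Finset.card_pos]
    have h1 : B.card = (Finset.Iic k).card :=
      Finset.card_image_of_injective _ (Tuple.sort g).injective
    have h2 : C.card = (Finset.Ici k).card :=
      Finset.card_image_of_injective _ (Tuple.sort f).injective
    have h3 : (Finset.Iic k).card + (Finset.Ici k).card ≥ n + 1 := by
      have hcui := Finset.card_union_add_card_inter (Finset.Iic k) (Finset.Ici k)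
      have hu : Finset.Iic k ∪ Finset.Ici k = Finset.univ := by
        ext i; simp [le_total i k]
      have hcu : (Finset.Iic k ∪ Finset.Ici k).card = n := by simp [hu]
      have hk : (Finset.Iic k ∩ Finset.Ici k).Nonempty := ⟨k, by simp⟩
      have := Finset.card_pos.mpr hk
      omega
    have h4 := Finset.card_union_add_card_inter B C
    have h5 : (B ∪ C).card ≤ n := by
      simpa using Finset.card_le_univ (B ∪ C)
    omega
  obtain ⟨i, hi⟩ := hcard
  rw [Finset.mem_inter] at hi
  obtain ⟨j, hj, hji⟩ := Finset.mem_image.mp hi.1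
  obtain ⟨j', hj', hj'i⟩ := Finset.mem_image.mp hi.2
  have hgi : g i ≤ (g ∘ Tuple.sort g) k := by
    rw [← hji]; exact Tuple.monotone_sort g (Finset.mem_Iic.mp hj)
  have hfi : (f ∘ Tuple.sort f) k ≤ f i := by
    rw [← hj'i]; exact Tuple.monotone_sort f (Finset.mem_Ici.mp hj')
  have hsup : f i - g i ≤ ⨆ i, |f i - g i| :=
    le_trans (le_abs_self _) (le_ciSup (f := fun i => |f i - g i|) (Finite.bddAbove_range _) i)
  linarith

lemma key_abs {n : ℕ} (f g : Fin n → ℝ) (k : Fin n) :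
    |(f ∘ Tuple.sort f) k - (g ∘ Tuple.sort g) k| ≤ ⨆ i, |f i - g i| := by
  have : Nonempty (Fin n) := ⟨k⟩
  rw [abs_sub_le_iff]
  refine ⟨key_one f g k, le_trans (key_one g f k) ?_⟩
  apply ciSup_le; intro i
  rw [abs_sub_comm]
  exact le_ciSup (f := fun i => |f i - g i|) (Finite.bddAbove_range _) i

/-- The reshaped band is weakly shorter than the original band in the sup norm. -/
theorem stmt16 {T : Type*} [Fintype T] [Nonempty T] [LinearOrder T] (L' U' : T → ℝ) :
    (⨆ t, |shape U' t - shape L' t|) ≤ ⨆ t, |U' t - L' t| := by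
  apply ciSup_le
  intro t
  set e := monoEquivOfFin T rfl
  set f : Fin (Fintype.card T) → ℝ := fun i => max 0 (min (U' (e i)) 1) with hf
  set g : Fin (Fintype.card T) → ℝ := fun i => max 0 (min (L' (e i)) 1) with hg
  have h1 : |shape U' t - shape L' t| =
      |(f ∘ Tuple.sort f) (e.symm t) - (g ∘ Tuple.sort g) (e.symm t)| := rfl
  rw [h1]
  refine le_trans (key_abs f g (e.symm t)) (ciSup_le fun i => ?_)
  have htrunc : |f i - g i| ≤ |U' (e i) - L' (e i)| := by
    calc |f i - g i| ≤ |min (U' (e i)) 1 - min (L' (e i)) 1| := by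
          simpa [hf, hg, max_comm (0:ℝ)] using
            abs_max_sub_max_le_abs (min (U' (e i)) 1) (min (L' (e i)) 1) 0
      _ ≤ |U' (e i) - L' (e i)| := by
          simpa using abs_min_sub_min_le_max (U' (e i)) 1 (L' (e i)) 1
  exact le_trans htrunc (le_ciSup (f := fun t => |U' t - L' t|) (Finite.bddAbove_range _) (e i))
end

section
/- Let L', U' : T → ℝ with L' ≤ U' pointwise on a finite totally ordered set T, and suppose there exists a nondecreasing F : T → [0,1] with L' ≤ F ≤ U'. Define U^I as the greatest nondecreasing minorant of 0 ∨ U' ∧ 1 and L^I as the smallest nondecreasing majorant of 0 ∨ L' ∧ 1. Then L^I ≤ F ≤ U^I pointwise, and the intersection band [L^I, U^I] equals the set of all nondecreasing [0,1]-valued functions w with L' ≤ w ≤ U' pointwise. -/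
open Set

/-- Intersection bands: with `U^I` the greatest nondecreasing minorant of
`0 ∨ U' ∧ 1` and `L^I` the smallest nondecreasing majorant of `0 ∨ L' ∧ 1`,
if a nondecreasing `F : T → [0,1]` satisfies `L' ≤ F ≤ U'` then
`L^I ≤ F ≤ U^I`, and the band `{w ∈ D : L^I ≤ w ≤ U^I}` equals
`{w ∈ D : L' ≤ w ≤ U'}`. -/
theorem stmt18 {T : Type*} [Fintype T] [LinearOrder T]
    (L' U' : T → ℝ) (hLU : ∀ t, L' t ≤ U' t)
    (F : T → ℝ) (hF : Monotone F) (hF01 : ∀ t, F t ∈ Icc (0:ℝ) 1)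
    (hcov : ∀ t, L' t ≤ F t ∧ F t ≤ U' t)
    (UI LI : T → ℝ)
    (hUI : ∀ t, UI t = sInf ((fun s => max 0 (min (U' s) 1)) '' {s | t ≤ s}))
    (hLI : ∀ t, LI t = sSup ((fun s => max 0 (min (L' s) 1)) '' {s | s ≤ t})) :
    (∀ t, LI t ≤ F t ∧ F t ≤ UI t) ∧
    {w : T → ℝ | Monotone w ∧ (∀ t, w t ∈ Icc (0:ℝ) 1) ∧
        ∀ t, LI t ≤ w t ∧ w t ≤ UI t} =
      {w : T → ℝ | Monotone w ∧ (∀ t, w t ∈ Icc (0:ℝ) 1) ∧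
        ∀ t, L' t ≤ w t ∧ w t ≤ U' t} := by
  -- bounds on L' and U' from existence of F
  have hL1 : ∀ t, L' t ≤ 1 := fun t => (hcov t).1.trans (hF01 t).2
  have hU0 : ∀ t, (0:ℝ) ≤ U' t := fun t => (hF01 t).1.trans (hcov t).2
  -- forward: any nondecreasing w ∈ [0,1] with L' ≤ w ≤ U' satisfies LI ≤ w ≤ UI
  have fwd : ∀ w : T → ℝ, Monotone w → (∀ t, w t ∈ Icc (0:ℝ) 1) →
      (∀ t, L' t ≤ w t ∧ w t ≤ U' t) → ∀ t, LI t ≤ w t ∧ w t ≤ UI t := by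
    intro w hw hw01 hband t
    constructor
    · rw [hLI t]
      apply csSup_le ⟨_, Set.mem_image_of_mem _ (show t ∈ {s | s ≤ t} from le_refl t)⟩
      rintro b ⟨s, hs, rfl⟩
      exact max_le (hw01 t).1 (le_trans (min_le_of_left_le (hband s).1) (hw hs))
    · rw [hUI t]
      apply le_csInf ⟨_, Set.mem_image_of_mem _ (show t ∈ {s | t ≤ s} from le_refl t)⟩
      rintro b ⟨s, hs, rfl⟩
      exact le_max_of_le_right (le_min (le_trans (hw hs) (hband s).2) (hw01 t).2)
  -- L' ≤ LI and UI ≤ U'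
  have hLIL : ∀ t, L' t ≤ LI t := by
    intro t
    rw [hLI t]
    have hbdd : BddAbove ((fun s => max 0 (min (L' s) 1)) '' {s | s ≤ t}) :=
      (Set.Finite.image _ (Set.toFinite _)).bddAbove
    calc L' t ≤ max 0 (min (L' t) 1) :=
          le_max_of_le_right (le_min le_rfl (hL1 t))
      _ ≤ _ := le_csSup hbdd ⟨t, le_refl t, rfl⟩
  have hUIU : ∀ t, UI t ≤ U' t := by
    intro t
    rw [hUI t]
    have hbdd : BddBelow ((fun s => max 0 (min (U' s) 1)) '' {s | t ≤ s}) :=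
      (Set.Finite.image _ (Set.toFinite _)).bddBelow
    calc sInf ((fun s => max 0 (min (U' s) 1)) '' {s | t ≤ s})
        ≤ max 0 (min (U' t) 1) := csInf_le hbdd ⟨t, le_refl t, rfl⟩
      _ ≤ U' t := max_le (hU0 t) (min_le_left _ _)
  refine ⟨fwd F hF hF01 hcov, ?_⟩
  ext w
  simp only [Set.mem_setOf_eq]
  constructor
  · rintro ⟨hw, hw01, hband⟩
    exact ⟨hw, hw01, fun t =>
      ⟨(hLIL t).trans (hband t).1, (hband t).2.trans (hUIU t)⟩⟩
  · rintro ⟨hw, hw01, hband⟩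
    exact ⟨hw, hw01, fwd w hw hw01 hband⟩
end
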